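/- Let Z ∈ ℝ^{m×c}, B a c × r graph incidence matrix, K a positive diagonal r × r matrix, and x* ∈ ℝ₊^m. Define μ(x) = Ln(x/x*) and f(x) = −ZBK Bᵀ Exp(Zᵀ μ(x)) for x ∈ ℝ₊^m. Then μ(x)ᵀ f(x) ≤ 0 for all x ∈ ℝ₊^m; i.e., the reaction vector field dissipates the Gibbs free energy. -/

import Mathlib

/-!
The pairing `μ ⬝ᵥ Z B K Bᵀ Exp(Zᵀ μ)` splits over the edges of the complex graph: writing
`a = Zᵀ μ`, the edge `j : S j → P j` contributes `κ j (a_{S j} - a_{P j}) (exp a_{S j} - exp a_{P j})`,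
which is nonnegative because `exp` is monotone.
-/

open Matrix

theorem incidence_transpose_mulVec {R ι ε : Type*} [Ring R] [Fintype ι] [DecidableEq ι]
    (S P : ε → ι) (hSP : ∀ j, S j ≠ P j) (B : Matrix ι ε R)
    (hB : ∀ i j, B i j = if i = S j then 1 else if i = P j then -1 else 0)
    (v : ι → R) (j : ε) :
    (Bᵀ *ᵥ v) j = v (S j) - v (P j) := by
  have hcol : (fun i => B i j) = Pi.single (S j) 1 - Pi.single (P j) 1 := by
    ext i
    by_cases hS : i = S j
    · subst hS
      simp [hB, hSP j]
    · by_cases hP : i = P j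
      · subst hP
        simp [hB, hS]
      · simp [hB, hS, hP]
  change (fun i => B i j) ⬝ᵥ v = _
  rw [hcol, sub_dotProduct, single_one_dotProduct, single_one_dotProduct]

theorem dotProduct_mul_diagonal_mul_transpose_mulVec {R n ι ε : Type*} [CommRing R]
    [Fintype n] [Fintype ι] [Fintype ε] [DecidableEq ε]
    (Z : Matrix n ι R) (B : Matrix ι ε R) (κ : ε → R) (u : n → R) (w : ι → R) :
    u ⬝ᵥ ((Z * B * diagonal κ * Bᵀ) *ᵥ w) =
      ∑ j, κ j * (Bᵀ *ᵥ (Zᵀ *ᵥ u)) j * (Bᵀ *ᵥ w) j := by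
  have hZB : u ᵥ* (Z * B) = Bᵀ *ᵥ (Zᵀ *ᵥ u) := by
    rw [← vecMul_vecMul, ← mulVec_transpose, ← mulVec_transpose]
  rw [← mulVec_mulVec, dotProduct_mulVec, ← vecMul_vecMul, hZB]
  simp only [dotProduct, vecMul_diagonal]
  exact Finset.sum_congr rfl fun j _ => by ring

theorem dotProduct_mulVec_exp_nonneg {n ι ε : Type*}
    [Fintype n] [Fintype ι] [Fintype ε] [DecidableEq ι] [DecidableEq ε]
    (S P : ε → ι) (hSP : ∀ j, S j ≠ P j) (B : Matrix ι ε ℝ)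
    (hB : ∀ i j, B i j = if i = S j then 1 else if i = P j then -1 else 0)
    (κ : ε → ℝ) (hκ : ∀ j, 0 ≤ κ j) (Z : Matrix n ι ℝ) (μ : n → ℝ) :
    0 ≤ μ ⬝ᵥ ((Z * B * diagonal κ * Bᵀ) *ᵥ fun ρ => Real.exp ((Zᵀ *ᵥ μ) ρ)) := by
  rw [dotProduct_mul_diagonal_mul_transpose_mulVec]
  refine Finset.sum_nonneg fun j _ => ?_
  rw [incidence_transpose_mulVec S P hSP B hB, incidence_transpose_mulVec S P hSP B hB,
    mul_assoc]
  exact mul_nonneg (hκ j)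
    ((monotone_id.monovary Real.exp_monotone).sub_mul_sub_nonneg _ _)

open Matrix in
theorem reaction_vector_field_dissipates_general (m c r : ℕ) (S P : Fin r → Fin c)
    (hSP : ∀ j, S j ≠ P j)
    (B : Matrix (Fin c) (Fin r) ℝ)
    (hB : ∀ i j, B i j = if i = S j then 1 else if i = P j then -1 else 0)
    (κ : Fin r → ℝ) (hκ : ∀ j, 0 < κ j)
    (Z : Matrix (Fin m) (Fin c) ℝ)
    (μ : Fin m → ℝ)
    (f : Fin m → ℝ)
    (hf : f = -((Z * B * Matrix.diagonal κ * Bᵀ) *ᵥ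
      fun ρ => Real.exp ((Zᵀ *ᵥ μ) ρ))) :
    μ ⬝ᵥ f ≤ 0 := by
  rw [hf, dotProduct_neg, neg_nonpos]
  exact dotProduct_mulVec_exp_nonneg S P hSP B hB κ (fun j => (hκ j).le) Z μ

open Matrix in
theorem reaction_vector_field_dissipates (m c r : ℕ) (S P : Fin r → Fin c)
    (hSP : ∀ j, S j ≠ P j)
    (B : Matrix (Fin c) (Fin r) ℝ)
    (hB : ∀ i j, B i j = if i = S j then 1 else if i = P j then -1 else 0)
    (κ : Fin r → ℝ) (hκ : ∀ j, 0 < κ j)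
    (Z : Matrix (Fin m) (Fin c) ℝ)
    (xs : Fin m → ℝ) (hxs : ∀ i, 0 < xs i)
    (x : Fin m → ℝ) (hx : ∀ i, 0 < x i)
    (μ : Fin m → ℝ) (hμ : μ = fun i => Real.log (x i / xs i))
    (f : Fin m → ℝ)
    (hf : f = -((Z * B * Matrix.diagonal κ * Bᵀ) *ᵥ
      fun ρ => Real.exp ((Zᵀ *ᵥ μ) ρ))) :
    μ ⬝ᵥ f ≤ 0 :=
  reaction_vector_field_dissipates_general m c r S P hSP B hB κ hκ Z μ f hf
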